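/- Let r ≥ 1, let α₀ > α₁ > ⋯ > α_r ≥ 1 and α′₀ > α′₁ > ⋯ > α′_{r−1} ≥ 1 be strictly decreasing positive integers, and let β, β′ be integers with 1 ≤ β < α₀ and 1 ≤ β′ < α′₀ satisfying α₀·β′ = α′₀·β. For integers b, b′ ≥ 1 define E(b, b′) = (b′ − G₀(b′))·α₀ + Σ_{k=1}^{r−1} (G_{k−1}(b′) − G_k(b′))·α_k + G_{r−1}(b′)·α_r − b·b′, where G_k(b′) = gcd(α′₀, …, α′_k, b′). Then E(α₀ − β, α′₀ − β′) = E(β, β′). -/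
import Mathlib


/-- The sequence of successive gcds: `Gseq α' b' 0 = b'` and
`Gseq α' b' (k+1) = gcd (α' k) (Gseq α' b' k)`, so
`Gseq α' b' (k+1) = gcd(α′₀, …, α′_k, b′) = G_k(b′)`. -/
def Gseq (α' : ℕ → ℕ) (b' : ℕ) : ℕ → ℕ
  | 0 => b'
  | k + 1 => Nat.gcd (α' k) (Gseq α' b' k)

/-- The number of edges
`E(b, b′) = (b′ − G₀(b′))·α₀ + Σ_{k=1}^{r−1} (G_{k−1}(b′) − G_k(b′))·α_k + G_{r−1}(b′)·α_r − b·b′`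
where `G_k(b′) = gcd(α′₀, …, α′_k, b′)`. -/
def edges (α α' : ℕ → ℕ) (r b b' : ℕ) : ℤ :=
  (∑ k ∈ Finset.range r,
      ((Gseq α' b' k : ℤ) - (Gseq α' b' (k + 1) : ℤ)) * (α k : ℤ))
    + (Gseq α' b' r : ℤ) * (α r : ℤ) - (b : ℤ) * (b' : ℤ)

lemma Gseq_sub (α' : ℕ → ℕ) (β' : ℕ) (h : β' ≤ α' 0) :
    ∀ k, Gseq α' (α' 0 - β') (k + 1) = Gseq α' β' (k + 1) := by
  intro k
  induction k with
  | zero =>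
      show Nat.gcd (α' 0) (α' 0 - β') = Nat.gcd (α' 0) β'
      have h2 : α' 0 - (α' 0 - β') = β' := by omega
      rw [← Nat.gcd_sub_self_left (Nat.sub_le _ _), h2, Nat.gcd_comm,
        Nat.gcd_sub_self_left h]
  | succ n ih =>
      show Nat.gcd (α' (n + 1)) _ = Nat.gcd (α' (n + 1)) _
      rw [ih]

/-- Let `r ≥ 1`, `α₀ > ⋯ > α_r ≥ 1` and `α′₀ > ⋯ > α′_{r−1} ≥ 1` strictly
decreasing positive integers, and `β, β′` integers with `1 ≤ β < α₀`, `1 ≤ β′ < α′₀` and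
`α₀·β′ = α′₀·β`. Then `E(α₀ − β, α′₀ − β′) = E(β, β′)`: the number of edges of the
diagram is invariant under the Fourier transform. -/
theorem edges_fourier_invariant (r : ℕ) (α α' : ℕ → ℕ) (β β' : ℕ)
    (hr : 1 ≤ r)
    (hdec : ∀ i, i < r → α (i + 1) < α i)
    (hpos : 1 ≤ α r)
    (hdec' : ∀ i, i < r - 1 → α' (i + 1) < α' i)
    (hpos' : 1 ≤ α' (r - 1))
    (hβ : 1 ≤ β) (hβα : β < α 0)
    (hβ' : 1 ≤ β') (hβα' : β' < α' 0)
    (hslope : α 0 * β' = α' 0 * β) :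
    edges α α' r (α 0 - β) (α' 0 - β') = edges α α' r β β' := by
  have h1 : β' ≤ α' 0 := le_of_lt hβα'
  have hG := Gseq_sub α' β' h1
  obtain ⟨r', rfl⟩ : ∃ r', r = r' + 1 := ⟨r - 1, by omega⟩
  unfold edges
  rw [Finset.sum_range_succ', Finset.sum_range_succ']
  have hsum : ∀ i ∈ Finset.range r',
      ((Gseq α' (α' 0 - β') (i + 1) : ℤ) - (Gseq α' (α' 0 - β') (i + 1 + 1) : ℤ)) * (α (i + 1) : ℤ)
        = ((Gseq α' β' (i + 1) : ℤ) - (Gseq α' β' (i + 1 + 1) : ℤ)) * (α (i + 1) : ℤ) := by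
    intro i _
    rw [hG i, hG (i + 1)]
  rw [Finset.sum_congr rfl hsum, hG r', hG 0]
  show _ + (((α' 0 - β' : ℕ) : ℤ) - _) * _ + _ - ((α 0 - β : ℕ) : ℤ) * ((α' 0 - β' : ℕ) : ℤ) = _
  have hc1 : ((α 0 - β : ℕ) : ℤ) = (α 0 : ℤ) - β := by
    push_cast [Nat.cast_sub (le_of_lt hβα)]; ring
  have hc2 : ((α' 0 - β' : ℕ) : ℤ) = (α' 0 : ℤ) - β' := by
    push_cast [Nat.cast_sub h1]; ring
  rw [hc1, hc2]
  have hslopeZ : (α 0 : ℤ) * β' = (α' 0 : ℤ) * β := by exact_mod_cast hslope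
  have h0 : Gseq α' β' 0 = β' := rfl
  rw [h0]
  linear_combination -hslopeZ
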